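/- Let H be a finite simple graph. If there exist an odd n ≥ 3 and a graph homomorphism f : C_n → H with σ₂(f) = 0 in 𝒢₂(H), then for every m ≥ 0 there is no Z₂-map from S^m(𝓗(H)) to Q₁. -/

import Mathlib

/-- The type of arcs of a simple graph: ordered pairs of adjacent vertices. -/
abbrev Arc {V : Type} (H : SimpleGraph V) : Type := {p : V × V // H.Adj p.1 p.2}

/-- The relators `(a,b)(c,b)⁻¹(c,d)(a,d)⁻¹` over all 4-cycles `(a,b,c,d)` of `H`. -/
def relators1 {V : Type} (H : SimpleGraph V) : Set (FreeGroup (Arc H)) :=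
  {r | ∃ (a b c d : V) (hab : H.Adj a b) (hcb : H.Adj c b) (hcd : H.Adj c d) (had : H.Adj a d),
    r = FreeGroup.of ⟨(a, b), hab⟩ * (FreeGroup.of ⟨(c, b), hcb⟩)⁻¹ *
        FreeGroup.of ⟨(c, d), hcd⟩ * (FreeGroup.of ⟨(a, d), had⟩)⁻¹}

/-- The group `𝒢₁(H)`, presented by the arcs with the 4-cycle relators. -/
abbrev G1 {V : Type} (H : SimpleGraph V) := PresentedGroup (relators1 H)

/-- `f : ZMod n → V` is a homomorphism from the cycle `C_n` to `H`. -/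
def IsCycleHom {V : Type} (H : SimpleGraph V) (n : ℕ) (f : ZMod n → V) : Prop :=
  ∀ i : ZMod n, H.Adj (f i) (f (i + 1))

/-- The signature `σ₁(f) = ∏_{i=0}^{n-1} (f(2i),f(2i+1))·(f(2i+2),f(2i+1))⁻¹ ∈ 𝒢₁(H)`,
the product being taken from left to right. -/
def sig1 {V : Type} (H : SimpleGraph V) (n : ℕ) (f : ZMod n → V) (hf : IsCycleHom H n f) :
    G1 H :=
  ((List.range n).map (fun k =>
    PresentedGroup.of (rels := relators1 H)
        ⟨(f (2 * (k : ZMod n)), f (2 * (k : ZMod n) + 1)), hf _⟩ *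
    (PresentedGroup.of (rels := relators1 H)
        ⟨(f (2 * (k : ZMod n) + 1 + 1), f (2 * (k : ZMod n) + 1)), (hf _).symm⟩)⁻¹)).prod

/-- The cycle graph on `ZMod n` (`i` adjacent to `i ± 1`). -/
def cyc (n : ℕ) : SimpleGraph (ZMod n) := SimpleGraph.fromRel (fun i j => j = i + 1)

/-- Adjacency for the generalized Mycielskian. -/
def mycAdj {W : Type} (G : SimpleGraph W) (q : ℕ) :
    (W × Fin q) ⊕ Unit → (W × Fin q) ⊕ Unit → Prop
  | Sum.inl (u, i), Sum.inl (v, j) =>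
      G.Adj u v ∧ ((i : ℕ) + 1 = (j : ℕ) ∨ (j : ℕ) + 1 = (i : ℕ) ∨ ((i : ℕ) = 0 ∧ (j : ℕ) = 0))
  | Sum.inl (u, i), Sum.inr _ => (i : ℕ) = q - 1 ∧ ∃ v, G.Adj u v
  | Sum.inr _, Sum.inl (u, i) => (i : ℕ) = q - 1 ∧ ∃ v, G.Adj u v
  | Sum.inr _, Sum.inr _ => False

/-- The generalized Mycielskian `M_q(G)`: levels `0,…,q-1` of `G` plus an apex `*`. -/
def Myc {W : Type} (G : SimpleGraph W) (q : ℕ) : SimpleGraph ((W × Fin q) ⊕ Unit) where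
  Adj := mycAdj G q
  symm := ⟨by
    rintro (⟨u, i⟩ | ⟨⟩) (⟨v, j⟩ | ⟨⟩) h <;> simp only [mycAdj] at h ⊢
    · exact ⟨h.1.symm, by tauto⟩
    · exact h
    · exact h⟩
  loopless := ⟨by
    rintro (⟨u, i⟩ | ⟨⟩) h <;> simp only [mycAdj] at h
    exact G.loopless.irrefl u h.1⟩
/-- The free `ZMod 2`-vector space on the arcs of `H`. -/
abbrev ArcSpace {V : Type} (H : SimpleGraph V) := Arc H →₀ ZMod 2

/-- The relator vectors `(a,b)+(c,b)+(c,d)+(a,d)` over all 4-cycles `(a,b,c,d)` of `H`. -/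
def relators2 {V : Type} (H : SimpleGraph V) : Set (ArcSpace H) :=
  {r | ∃ (a b c d : V) (hab : H.Adj a b) (hcb : H.Adj c b) (hcd : H.Adj c d) (had : H.Adj a d),
    r = Finsupp.single ⟨(a, b), hab⟩ 1 + Finsupp.single ⟨(c, b), hcb⟩ 1 +
        Finsupp.single ⟨(c, d), hcd⟩ 1 + Finsupp.single ⟨(a, d), had⟩ 1}

/-- `𝒢₂(H)`: the quotient of the free `ZMod 2`-vector space on `A(H)` by the span of the
4-cycle relators. -/
abbrev G2 {V : Type} (H : SimpleGraph V) :=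
  ArcSpace H ⧸ Submodule.span (ZMod 2) (relators2 H)

/-- The class of the basis vector corresponding to an arc, in `𝒢₂(H)`. -/
noncomputable def arcClass {V : Type} (H : SimpleGraph V) (a : Arc H) : G2 H :=
  Submodule.Quotient.mk (Finsupp.single a 1)

/-- The signature `σ₂(f) = Σ_{i=0}^{n-1} [(f(2i),f(2i+1)) + (f(2i+2),f(2i+1))] ∈ 𝒢₂(H)`. -/
noncomputable def sig2 {V : Type} (H : SimpleGraph V) (n : ℕ) (f : ZMod n → V) (hf : IsCycleHom H n f) :
    G2 H :=
  ∑ k ∈ Finset.range n,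
    (arcClass H ⟨(f (2 * (k : ZMod n)), f (2 * (k : ZMod n) + 1)), hf _⟩ +
     arcClass H ⟨(f (2 * (k : ZMod n) + 1 + 1), f (2 * (k : ZMod n) + 1)), (hf _).symm⟩)
/-! ### The poset `Q₁` (face poset of the 1-dimensional cross-polytope) -/

/-- The four elements `+0, -0, +1, -1` of `Q₁`. -/
inductive Q1 : Type
  | p0 | m0 | p1 | m1
deriving DecidableEq

instance instFintypeQ1 : Fintype Q1 :=
  ⟨{.p0, .m0, .p1, .m1}, fun x => by cases x <;> decide⟩

/-- The level (`false` for `±0`, `true` for `±1`) of an element of `Q₁`. -/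
def Q1.lvl : Q1 → Bool
  | .p0 => false | .m0 => false | .p1 => true | .m1 => true

/-- The order on `Q₁`: `±0 < ±1` (all four strict relations). -/
instance : PartialOrder Q1 where
  le x y := x = y ∨ (x.lvl = false ∧ y.lvl = true)
  le_refl x := Or.inl rfl
  le_trans x y z hxy hyz := by
    rcases hxy with rfl | ⟨h1, h2⟩
    · exact hyz
    rcases hyz with rfl | ⟨h3, h4⟩
    · exact Or.inr ⟨h1, h2⟩
    · rw [h2] at h3; exact absurd h3 (by simp)
  le_antisymm x y hxy hyx := by
    rcases hxy with rfl | ⟨h1, h2⟩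
    · rfl
    rcases hyx with rfl | ⟨h3, h4⟩
    · rfl
    · rw [h2] at h3; exact absurd h3 (by simp)

/-- The involution of `Q₁`, swapping `+x` and `-x`. -/
def q1inv : Q1 → Q1
  | .p0 => .m0 | .m0 => .p0 | .p1 => .m1 | .m1 => .p1


/-- The barycentric subdivision of a poset: nonempty chains, ordered by inclusion. -/
def Sd (α : Type) [PartialOrder α] : Type :=
  {C : Set α // C.Nonempty ∧ IsChain (· ≤ ·) C}

instance {α : Type} [PartialOrder α] : PartialOrder (Sd α) :=
  inferInstanceAs (PartialOrder {C : Set α // C.Nonempty ∧ IsChain (· ≤ ·) C})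

instance {α : Type} [PartialOrder α] [Finite α] : Finite (Sd α) :=
  inferInstanceAs (Finite {C : Set α // C.Nonempty ∧ IsChain (· ≤ ·) C})

/-- A bundled finite `Z₂`-poset: a finite poset with a fixed-point free order-involution. -/
structure Z2Poset where
  carrier : Type
  [po : PartialOrder carrier]
  [fin : Finite carrier]
  inv : carrier → carrier
  mono : Monotone inv
  invol : ∀ x, inv (inv x) = x
  nfix : ∀ x, inv x ≠ x

attribute [instance] Z2Poset.po Z2Poset.fin

/-- The barycentric subdivision of a `Z₂`-poset, with involution `C ↦ ν(C)`. -/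
def Z2Poset.sd (P : Z2Poset) : Z2Poset where
  carrier := Sd P.carrier
  po := inferInstance
  fin := inferInstance
  inv := fun C => ⟨P.inv '' C.val, C.prop.1.image _,
    C.prop.2.image_of_map_rel (· ≤ ·) (· ≤ ·) P.inv (fun _ _ h => P.mono h)⟩
  mono := fun C D h => Set.image_mono h
  invol := fun C => Subtype.ext (by
    show P.inv '' (P.inv '' C.val) = C.val
    rw [Set.image_image]; simp [P.invol])
  nfix := fun C h => by
    have hval : P.inv '' C.val = C.val := congrArg Subtype.val h
    obtain ⟨m, hm, hmax'⟩ :=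
      Set.Finite.exists_maximalFor id C.val (Set.toFinite _) C.prop.1
    have hmax : ∀ a ∈ C.val, m ≤ a → m = a := fun a ha hle => le_antisymm hle (hmax' ha hle)
    have hmem : P.inv m ∈ C.val := by rw [← hval]; exact ⟨m, hm, rfl⟩
    have hne : m ≠ P.inv m := fun e => P.nfix m e.symm
    rcases C.prop.2 hm hmem hne with hle | hle
    · exact P.nfix m (hmax _ hmem hle).symm
    · have h2 : m ≤ P.inv m := by
        have h3 := P.mono hle
        rwa [P.invol] at h3
      exact P.nfix m (hmax _ hmem h2).symm
/-- The hom-poset `𝓗(H)`: pairs `(A,B)` of nonempty sets of vertices with every vertex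
of `A` adjacent to every vertex of `B`, ordered by coordinatewise inclusion. -/
def HomPt {V : Type} (H : SimpleGraph V) : Type :=
  {AB : Set V × Set V // AB.1.Nonempty ∧ AB.2.Nonempty ∧ ∀ a ∈ AB.1, ∀ b ∈ AB.2, H.Adj a b}

instance {V : Type} (H : SimpleGraph V) : PartialOrder (HomPt H) :=
  inferInstanceAs (PartialOrder
    {AB : Set V × Set V // AB.1.Nonempty ∧ AB.2.Nonempty ∧ ∀ a ∈ AB.1, ∀ b ∈ AB.2, H.Adj a b})

instance {V : Type} [Finite V] (H : SimpleGraph V) : Finite (HomPt H) :=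
  inferInstanceAs (Finite
    {AB : Set V × Set V // AB.1.Nonempty ∧ AB.2.Nonempty ∧ ∀ a ∈ AB.1, ∀ b ∈ AB.2, H.Adj a b})

/-- The eight-element subposet `ρ⁺` of `𝓗(H)` associated to a 4-cycle `(a,b,c,d)`. -/
def rhoP {V : Type} (H : SimpleGraph V) (a b c d : V) : Set (HomPt H) :=
  {X | X.val = ({a}, H.neighborSet a) ∨ X.val = (H.neighborSet b, {b}) ∨
       X.val = ({c}, H.neighborSet c) ∨ X.val = (H.neighborSet d, {d}) ∨
       X.val = ({a}, {b}) ∨ X.val = ({c}, {b}) ∨ X.val = ({c}, {d}) ∨ X.val = ({a}, {d})}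

/-- The thirteen-element subposet `D(ρ⁺)` of `𝓗(H)`, obtained from `ρ⁺` by adding five
further elements. -/
def DrhoP {V : Type} (H : SimpleGraph V) (a b c d : V) : Set (HomPt H) :=
  rhoP H a b c d ∪
    {X | X.val = ({a}, {b, d}) ∨ X.val = ({a, c}, {b}) ∨ X.val = ({c}, {b, d}) ∨
         X.val = ({a, c}, {d}) ∨ X.val = (({a, c} : Set V), ({b, d} : Set V))}

/-- The involution `ν(A,B) = (B,A)` of the hom-poset. -/
def nuH {V : Type} (H : SimpleGraph V) (X : HomPt H) : HomPt H :=
  ⟨(X.val.2, X.val.1), X.prop.2.1, X.prop.1, fun b hb a ha => (X.prop.2.2 a ha b hb).symm⟩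

/-- The hom-complex `𝓗(H)` of a finite simple graph, as a `Z₂`-poset. -/
def homZ2 {V : Type} [Fintype V] (H : SimpleGraph V) : Z2Poset where
  carrier := HomPt H
  po := inferInstance
  fin := inferInstance
  inv := nuH H
  mono := fun X Y h => ⟨h.2, h.1⟩
  invol := fun X => rfl
  nfix := fun X h => by
    have h1 : X.val.2 = X.val.1 := congrArg (fun Y : HomPt H => Y.val.1) h
    obtain ⟨x, hx⟩ := X.prop.1
    exact H.loopless.irrefl x (X.prop.2.2 x hx x (by rw [h1]; exact hx))

/-! `Q₁` carries ℤ/2-data that pull back along `Z₂`-maps: a 1-cocycle `c` on comparable pairs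
whose defect `c + ν^*c` is the coboundary of a 0-cochain `η` with `η ∘ ν = η + 1`. Such data on
`S(P)` descend to `P` by evaluating on the chains `{x} ⊆ {x, y}`, so a `Z₂`-map `S^m(𝓗(H)) → Q₁`
would put them on `𝓗(H)`. There they give a linear form on arcs,
`(u,v) ↦ c(({u},{v}), ({u},N(u))) + c(({u},{v}), (N(v),{v}))`, which kills the 4-cycle relators
(compare everything with `({a,c},{b,d})`) and so is defined on `𝒢₂(H)`. Using `c + ν^*c = δη`
at `({u},{v}) ≤ (N(v),{v})` and `η ∘ ν = η + 1`, its value on `σ₂(f)` telescopes to `n ≡ 1`. -/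

instance : DecidableRel ((· ≤ ·) : Q1 → Q1 → Prop) :=
  fun x y => decidable_of_iff (x = y ∨ (x.lvl = false ∧ y.lvl = true)) Iff.rfl

abbrev Q1.z2Poset : Z2Poset where
  carrier := Q1
  inv := q1inv
  mono := by decide
  invol := by decide
  nfix := by decide

namespace Z2Poset

variable {P Q : Z2Poset}

def sdSingleton (x : P.carrier) : P.sd.carrier :=
  ⟨{x}, Set.singleton_nonempty x, Set.subsingleton_singleton.isChain⟩

def sdPair {x y : P.carrier} (h : x ≤ y) : P.sd.carrier :=
  ⟨{x, y}, Set.insert_nonempty x {y}, IsChain.pair h⟩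

lemma sdSingleton_le_sdPair_left {x y : P.carrier} (h : x ≤ y) : sdSingleton x ≤ sdPair h :=
  Set.singleton_subset_iff.mpr (Set.mem_insert x {y})

lemma sdSingleton_le_sdPair_right {x y : P.carrier} (h : x ≤ y) : sdSingleton y ≤ sdPair h :=
  Set.singleton_subset_iff.mpr (Set.mem_insert_of_mem x rfl)

lemma sd_inv_singleton (x : P.carrier) : P.sd.inv (sdSingleton x) = sdSingleton (P.inv x) :=
  Subtype.ext (Set.image_singleton ..)

lemma sd_inv_pair {x y : P.carrier} (h : x ≤ y) :
    P.sd.inv (sdPair h) = sdPair (P.mono h) :=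
  Subtype.ext (Set.image_pair ..)

structure TwistedCocycle (P : Z2Poset) where
  c : P.carrier → P.carrier → ZMod 2
  η : P.carrier → ZMod 2
  cocycle : ∀ {x y z}, x ≤ y → y ≤ z → c x z = c x y + c y z
  add_inv : ∀ {x y}, x ≤ y → c x y + c (P.inv x) (P.inv y) = η x + η y
  η_inv : ∀ x, η (P.inv x) = η x + 1

namespace TwistedCocycle

lemma c_add_c_eq_c_add_c (T : TwistedCocycle P) {a b m w : P.carrier} (ha : a ≤ m) (hb : b ≤ m)
    (hm : m ≤ w) : T.c a m + T.c b m = T.c a w + T.c b w := by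
  rw [T.cocycle ha hm, T.cocycle hb hm]
  grind

def comap (T : TwistedCocycle Q) (g : P.carrier → Q.carrier) (hg : Monotone g)
    (hg_inv : ∀ x, g (P.inv x) = Q.inv (g x)) : TwistedCocycle P where
  c x y := T.c (g x) (g y)
  η x := T.η (g x)
  cocycle hxy hyz := T.cocycle (hg hxy) (hg hyz)
  add_inv {x y} hxy := by simpa only [hg_inv] using T.add_inv (hg hxy)
  η_inv x := by rw [hg_inv, T.η_inv]

/-- On the square `+0 < +1 > -0 < -1 > +0`, `c` is the indicator of the edge `-0 < -1` and `η`
takes the values `0, 1, 1, 0`. -/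
def q1TwistedCocycle : TwistedCocycle Q1.z2Poset where
  c q r := if q = .m0 ∧ r = .m1 then 1 else 0
  η | .p0 => 0 | .p1 => 1 | .m0 => 1 | .m1 => 0
  cocycle := by decide
  add_inv := by decide
  η_inv := by decide

open Classical in
noncomputable def ofSd (T : TwistedCocycle P.sd) : TwistedCocycle P where
  c x y :=
    if h : x ≤ y then T.c (sdSingleton x) (sdPair h) + T.c (sdSingleton y) (sdPair h) else 0
  η x := T.η (sdSingleton x)
  cocycle {x y z} hxy hyz := by
    have hxz := hxy.trans hyz
    let w : P.sd.carrier := ⟨{x, y, z}, Set.insert_nonempty ..,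
      ((IsChain.pair hyz).insert fun b hb _ => by rcases hb with rfl | rfl <;> simp [*])⟩
    have key {a b : P.carrier} (hab : a ≤ b) (ha : a ∈ w.1) (hb : b ∈ w.1) :
        T.c (sdSingleton a) (sdPair hab) + T.c (sdSingleton b) (sdPair hab) =
          T.c (sdSingleton a) w + T.c (sdSingleton b) w :=
      T.c_add_c_eq_c_add_c (sdSingleton_le_sdPair_left hab) (sdSingleton_le_sdPair_right hab)
        (Set.insert_subset ha (Set.singleton_subset_iff.mpr hb))
    simp only [dif_pos hxy, dif_pos hyz, dif_pos hxz]
    rw [key hxy (by simp [w]) (by simp [w]), key hyz (by simp [w]) (by simp [w]),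
      key hxz (by simp [w]) (by simp [w])]
    grind
  add_inv {x y} hxy := by
    have hsx := T.add_inv (sdSingleton_le_sdPair_left hxy)
    have hsy := T.add_inv (sdSingleton_le_sdPair_right hxy)
    rw [sd_inv_singleton, sd_inv_pair] at hsx hsy
    simp only [dif_pos hxy, dif_pos (P.mono hxy)]
    grind
  η_inv x := by rw [← sd_inv_singleton, T.η_inv]

noncomputable def ofIterateSd : {P : Z2Poset} → (m : ℕ) → TwistedCocycle (sd^[m] P) →
    TwistedCocycle P
  | _, 0, T => T
  | _, m + 1, T => ofSd (ofIterateSd m T)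

end TwistedCocycle

end Z2Poset

lemma Finset.sum_range_even_add_odd {M : Type*} [AddCommMonoid M] (g : ℕ → M) (n : ℕ) :
    ∑ k ∈ Finset.range n, (g (2 * k) + g (2 * k + 1)) =
      ∑ j ∈ Finset.range (2 * n), g j := by
  induction n with
  | zero => simp
  | succ n ih =>
    rw [Finset.sum_range_succ, ih, Nat.mul_succ, Finset.sum_range_succ, Finset.sum_range_succ,
      add_assoc]

lemma ZMod.sum_range_even_add_odd {M : Type*} [AddCommMonoid M] {n : ℕ} (b : ZMod n → M) :
    ∑ k ∈ Finset.range n, (b (2 * k) + b (2 * k + 1)) =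
      2 • ∑ k ∈ Finset.range n, b k := by
  have h := Finset.sum_range_even_add_odd (fun j : ℕ => b j) n
  push_cast at h
  rw [h, two_mul, Finset.sum_range_add, two_nsmul]
  simp

namespace HomPt

variable {V : Type} {H : SimpleGraph V}

lemma le_iff {X Y : HomPt H} : X ≤ Y ↔ X.1.1 ⊆ Y.1.1 ∧ X.1.2 ⊆ Y.1.2 := Iff.rfl

def edge {u v : V} (h : H.Adj u v) : HomPt H :=
  ⟨({u}, {v}), Set.singleton_nonempty u, Set.singleton_nonempty v, by simpa using h⟩

def leftStar (u : V) (hu : ∃ v, H.Adj u v) : HomPt H :=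
  ⟨({u}, H.neighborSet u), Set.singleton_nonempty u, hu, by simp⟩

def rightStar (v : V) (hv : ∃ u, H.Adj v u) : HomPt H :=
  ⟨(H.neighborSet v, {v}), hv, Set.singleton_nonempty v, by simp [H.adj_comm]⟩

lemma exists_val_eq {A B : Set V} (hA : A.Nonempty) (hB : B.Nonempty)
    (hAB : ∀ a ∈ A, ∀ b ∈ B, H.Adj a b) : ∃ X : HomPt H, X.1 = (A, B) :=
  ⟨⟨(A, B), hA, hB, hAB⟩, rfl⟩

@[simp] lemma edge_val {u v : V} (h : H.Adj u v) : (edge h).1 = ({u}, {v}) := rfl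

@[simp] lemma leftStar_val (u : V) (hu : ∃ v, H.Adj u v) :
    (leftStar u hu).1 = ({u}, H.neighborSet u) := rfl

@[simp] lemma rightStar_val (v : V) (hv : ∃ u, H.Adj v u) :
    (rightStar v hv).1 = (H.neighborSet v, {v}) := rfl

end HomPt

namespace Z2Poset.TwistedCocycle

open HomPt

variable {V : Type} [Fintype V] {H : SimpleGraph V} (T : TwistedCocycle (homZ2 H))

def arcValue (e : Arc H) : ZMod 2 :=
  T.c (edge e.2) (leftStar _ ⟨_, e.2⟩) + T.c (edge e.2) (rightStar _ ⟨_, e.2.symm⟩)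

def arcSym (e : Arc H) : ZMod 2 :=
  T.c (edge e.2) (leftStar _ ⟨_, e.2⟩) + T.c (edge e.2.symm) (leftStar _ ⟨_, e.2.symm⟩) +
    T.η (edge e.2)

lemma arcValue_eq {u v : V} (h : H.Adj u v) :
    T.arcValue ⟨(u, v), h⟩ = T.arcSym ⟨(u, v), h⟩ + T.η (rightStar v ⟨u, h.symm⟩) := by
  have hinv : T.c (edge h) (rightStar v ⟨u, h.symm⟩) +
      T.c (edge h.symm) (leftStar v ⟨u, h.symm⟩) =
      T.η (edge h) + T.η (rightStar v ⟨u, h.symm⟩) :=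
    T.add_inv (le_iff.mpr (by simp [h.symm]))
  simp only [arcValue, arcSym]
  grind

lemma arcSym_swap {u v : V} (h : H.Adj u v) :
    T.arcSym ⟨(v, u), h.symm⟩ = T.arcSym ⟨(u, v), h⟩ + 1 := by
  have hη : T.η (edge h.symm) = T.η (edge h) + 1 := T.η_inv (edge h)
  simp only [arcSym]
  grind

lemma arcValue_eq_of_le {u v : V} (h : H.Adj u v) {m m' z : HomPt H} (hm : edge h ≤ m)
    (hm' : edge h ≤ m') (hmy : m ≤ leftStar u ⟨v, h⟩)
    (hmy' : m' ≤ rightStar v ⟨u, h.symm⟩) (hmz : m ≤ z) (hmz' : m' ≤ z) :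
    T.arcValue ⟨(u, v), h⟩ = (T.c m (leftStar u ⟨v, h⟩) + T.c m z) +
      (T.c m' (rightStar v ⟨u, h.symm⟩) + T.c m' z) := by
  have hz := T.cocycle hm hmz
  have hz' := T.cocycle hm' hmz'
  rw [arcValue, T.cocycle hm hmy, T.cocycle hm' hmy']
  grind

lemma arcValue_square_sum_eq_zero {a b c d : V} (hab : H.Adj a b) (hcb : H.Adj c b)
    (hcd : H.Adj c d) (had : H.Adj a d) :
    T.arcValue ⟨(a, b), hab⟩ + T.arcValue ⟨(c, b), hcb⟩ + T.arcValue ⟨(c, d), hcd⟩ +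
      T.arcValue ⟨(a, d), had⟩ = 0 := by
  obtain ⟨z, hz⟩ : ∃ X : HomPt H, X.1 = ({a, c}, {b, d}) :=
    exists_val_eq (by simp) (by simp) (by simp [*])
  obtain ⟨m₁, hm₁⟩ : ∃ X : HomPt H, X.1 = ({a}, {b, d}) :=
    exists_val_eq (by simp) (by simp) (by simp [*])
  obtain ⟨m₂, hm₂⟩ : ∃ X : HomPt H, X.1 = ({a, c}, {b}) :=
    exists_val_eq (by simp) (by simp) (by simp [*])
  obtain ⟨m₃, hm₃⟩ : ∃ X : HomPt H, X.1 = ({c}, {b, d}) :=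
    exists_val_eq (by simp) (by simp) (by simp [*])
  obtain ⟨m₄, hm₄⟩ : ∃ X : HomPt H, X.1 = ({a, c}, {d}) :=
    exists_val_eq (by simp) (by simp) (by simp [*])
  rw [T.arcValue_eq_of_le hab (m := m₁) (m' := m₂) (z := z),
    T.arcValue_eq_of_le hcb (m := m₃) (m' := m₂) (z := z),
    T.arcValue_eq_of_le hcd (m := m₃) (m' := m₄) (z := z),
    T.arcValue_eq_of_le had (m := m₁) (m' := m₄) (z := z)]
  · grind
  all_goals
    exact le_iff.mpr (by simp [Set.insert_subset_iff, *, hab.symm, hcb.symm, hcd.symm, had.symm])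

noncomputable def arcForm : G2 H →ₗ[ZMod 2] ZMod 2 :=
  (Submodule.span (ZMod 2) (relators2 H)).liftQ (Finsupp.linearCombination (ZMod 2) T.arcValue) <|
    Submodule.span_le.mpr <| by
      rintro _ ⟨a, b, c, d, hab, hcb, hcd, had, rfl⟩
      simp [T.arcValue_square_sum_eq_zero]

lemma arcForm_arcClass (e : Arc H) : T.arcForm (arcClass H e) = T.arcValue e := by
  simp [arcForm, arcClass]

lemma arcForm_sig2 {n : ℕ} (hn : Odd n) (f : ZMod n → V) (hf : IsCycleHom H n f) :
    T.arcForm (sig2 H n f hf) = 1 := by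
  set b : ZMod n → ZMod 2 := fun i => T.arcSym ⟨(f i, f (i + 1)), hf i⟩
  have hstep (i : ZMod n) : T.arcValue ⟨(f i, f (i + 1)), hf i⟩ +
      T.arcValue ⟨(f (i + 1 + 1), f (i + 1)), (hf (i + 1)).symm⟩ = b i + b (i + 1) + 1 := by
    rw [T.arcValue_eq, T.arcValue_eq, T.arcSym_swap (hf (i + 1))]
    grind
  simp only [sig2, map_sum, map_add, arcForm_arcClass]
  rw [Finset.sum_congr rfl fun k _ => hstep _, Finset.sum_add_distrib, ZMod.sum_range_even_add_odd,
    two_nsmul, CharTwo.add_self_eq_zero, zero_add, Finset.sum_const, Finset.card_range,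
    nsmul_one, ZMod.natCast_eq_one_iff_odd]
  exact hn

lemma sig2_ne_zero (T : TwistedCocycle (homZ2 H)) {n : ℕ} (hn : Odd n) (f : ZMod n → V)
    (hf : IsCycleHom H n f) :
    sig2 H n f hf ≠ 0 := fun h => by
  simpa [h] using T.arcForm_sig2 hn f hf

end Z2Poset.TwistedCocycle

/-- If `H` has an odd cycle with `σ₂ = 0`, then for every `m ≥ 0`
there is no `Z₂`-map from `S^m(𝓗(H))` to `Q₁`. -/
theorem no_z2map_of_trivial_sig2 {V : Type} [Fintype V] (H : SimpleGraph V)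
    (hsig : ∃ n : ℕ, Odd n ∧ 3 ≤ n ∧
      ∃ (f : ZMod n → V) (hf : IsCycleHom H n f), sig2 H n f hf = 0)
    (m : ℕ) :
    ¬ ∃ f : (Z2Poset.sd^[m] (homZ2 H)).carrier → Q1,
        Monotone f ∧ ∀ x, f ((Z2Poset.sd^[m] (homZ2 H)).inv x) = q1inv (f x) := by
  rintro ⟨g, hg, hg_inv⟩
  obtain ⟨n, hn, -, f, hf, hσ⟩ := hsig
  exact ((Z2Poset.TwistedCocycle.q1TwistedCocycle.comap g hg hg_inv).ofIterateSd m).sig2_ne_zero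
    hn f hf hσ
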